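/- arXiv:2605.13347 — 3 statements merged into one kernel-verified Lean document; each statement's English description precedes it below -/
import Mathlib

section
/- Let N ≥ 1 and s ∈ (0, min(1, N/2)). There exists a constant C > 0 depending only on N and s such that for every c ∈ (0, 1/3), if λ_c > 0 is chosen so that the function Ψ(x) = λ_c [ (1 + |x|²/c²)^{-(N-2s)/2} - (1 + 1/c²)^{-(N-2s)/2} ] has ‖Ψ‖_{L^{2N/(N-2s)}(B_1(0))} = 1, then C^{-1} c^{-(N-2s)/2} ≤ λ_c ≤ C c^{-(N-2s)/2}. -/
open Real MeasureTheory Metric Module Filter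

/-! Write `Ψ_{λ,c} = λ f_c` with `f_c = truncatedBubble a c`, `a = (N - 2s)/2`, and let
`p = 2N/(N - 2s)`, so that `a p = N`. Since `c < 1/3`, `f_c ≥ 2^{-a} - 10^{-a}` on the ball of
radius `c`; on the unit ball `f_c^p ≤ 2^N (1 + |x|/c)^{-2N}`, whose integral over `ℝ^N` is `c^N`
times a constant. Hence `∫_{B_1} f_c^p ≍ c^N`, and the normalisation
`λ = (∫_{B_1} f_c^p)^{-1/p}` gives `λ ≍ c^{-N/p} = c^{-a}`. -/

section TruncatedBubble

variable {E : Type*} [NormedAddCommGroup E] {a c p : ℝ}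

noncomputable def truncatedBubble (a c : ℝ) (x : E) : ℝ :=
  (1 + ‖x‖ ^ 2 / c ^ 2) ^ (-a) - (1 + 1 / c ^ 2) ^ (-a)

lemma continuous_truncatedBubble (a c : ℝ) : Continuous (truncatedBubble (E := E) a c) :=
  ((continuous_const.add ((continuous_norm.pow 2).div_const _)).rpow_const
    fun x => Or.inl (by positivity : 1 + ‖x‖ ^ 2 / c ^ 2 ≠ 0)).sub continuous_const

lemma two_rpow_neg_sub_ten_rpow_neg_le_truncatedBubble (ha : 0 ≤ a) (hc : 0 < c)
    (hc3 : c < 1 / 3) {x : E} (hx : ‖x‖ ≤ c) :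
    2 ^ (-a) - 10 ^ (-a) ≤ truncatedBubble a c x := by
  have hnear : (2 : ℝ) ^ (-a) ≤ (1 + ‖x‖ ^ 2 / c ^ 2) ^ (-a) := by
    refine rpow_le_rpow_of_nonpos (by positivity) ?_ (neg_nonpos.mpr ha)
    have : ‖x‖ ^ 2 / c ^ 2 ≤ 1 :=
      div_le_one_of_le₀ (pow_le_pow_left₀ (norm_nonneg x) hx 2) (by positivity)
    linarith
  have hfar : (1 + 1 / c ^ 2) ^ (-a) ≤ (10 : ℝ) ^ (-a) := by
    refine rpow_le_rpow_of_nonpos (by norm_num) ?_ (neg_nonpos.mpr ha)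
    have : 9 ≤ 1 / c ^ 2 := by rw [le_div_iff₀ (by positivity)]; nlinarith
    linarith
  unfold truncatedBubble
  linarith

lemma truncatedBubble_le [NormedSpace ℝ E] (ha : 0 ≤ a) (hc : 0 < c) (x : E) :
    truncatedBubble a c x ≤ 2 ^ a * (1 + ‖c⁻¹ • x‖) ^ (-(2 * a)) := by
  have hu : ‖x‖ ^ 2 / c ^ 2 = ‖c⁻¹ • x‖ ^ 2 := by
    rw [norm_smul, norm_inv, norm_of_nonneg hc.le, inv_mul_eq_div, div_pow]
  set u := ‖c⁻¹ • x‖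
  calc truncatedBubble a c x ≤ (1 + u ^ 2) ^ (-a) := by
        rw [truncatedBubble, hu]
        linarith [rpow_nonneg (by positivity : (0 : ℝ) ≤ 1 + 1 / c ^ 2) (-a)]
    _ ≤ ((1 + u) ^ 2 / 2) ^ (-a) :=
        rpow_le_rpow_of_nonpos (by positivity) (by nlinarith [sq_nonneg (1 - u)])
          (neg_nonpos.mpr ha)
    _ = 2 ^ a * (1 + u) ^ (-(2 * a)) := by
        rw [div_rpow (by positivity) zero_le_two, rpow_neg zero_le_two, div_inv_eq_mul,
          mul_comm, ← rpow_natCast, ← rpow_mul (by positivity)]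
        push_cast
        ring_nf

lemma truncatedBubble_nonneg (ha : 0 ≤ a) {x : E} (hx : ‖x‖ ≤ 1) :
    0 ≤ truncatedBubble a c x := by
  have : ‖x‖ ^ 2 / c ^ 2 ≤ 1 / c ^ 2 := by gcongr; exact pow_le_one₀ (norm_nonneg x) hx
  exact sub_nonneg.mpr (rpow_le_rpow_of_nonpos (by positivity) (by linarith) (neg_nonpos.mpr ha))

lemma abs_truncatedBubble_rpow_le [NormedSpace ℝ E] (ha : 0 ≤ a) (hp : 0 ≤ p) (hc : 0 < c)
    {x : E} (hx : ‖x‖ ≤ 1) :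
    |truncatedBubble a c x| ^ p ≤ 2 ^ (a * p) * (1 + ‖c⁻¹ • x‖) ^ (-(2 * (a * p))) := by
  have hnonneg := truncatedBubble_nonneg (c := c) ha hx
  calc |truncatedBubble a c x| ^ p ≤ (2 ^ a * (1 + ‖c⁻¹ • x‖) ^ (-(2 * a))) ^ p := by
        rw [abs_of_nonneg hnonneg]
        exact rpow_le_rpow hnonneg (truncatedBubble_le ha hc x) hp
    _ = _ := by
        rw [mul_rpow (by positivity) (by positivity), ← rpow_mul zero_le_two,
          ← rpow_mul (by positivity)]
        ring_nf

variable [NormedSpace ℝ E] [FiniteDimensional ℝ E] [MeasurableSpace E] [BorelSpace E]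
  (μ : Measure E) [μ.IsAddHaarMeasure]

lemma integrableOn_ball_abs_truncatedBubble_rpow (hp : 0 ≤ p) :
    IntegrableOn (fun x => |truncatedBubble a c x| ^ p) (ball (0 : E) 1) μ :=
  (((continuous_truncatedBubble a c).abs.rpow_const fun _ => Or.inr hp).continuousOn
    |>.integrableOn_compact (isCompact_closedBall 0 1)).mono_set ball_subset_closedBall

lemma mul_pow_finrank_le_setIntegral_abs_truncatedBubble_rpow (ha : 0 ≤ a) (hp : 0 ≤ p)
    (hc : 0 < c) (hc3 : c < 1 / 3) :
    (2 ^ (-a) - 10 ^ (-a)) ^ p * μ.real (ball (0 : E) 1) * c ^ finrank ℝ E ≤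
      ∫ x in ball (0 : E) 1, |truncatedBubble a c x| ^ p ∂μ := by
  have hδ : (0 : ℝ) ≤ 2 ^ (-a) - 10 ^ (-a) :=
    sub_nonneg.mpr (rpow_le_rpow_of_nonpos two_pos (by norm_num) (neg_nonpos.mpr ha))
  have hsub : ball (0 : E) c ⊆ ball 0 1 := ball_subset_ball (by linarith)
  have hint := integrableOn_ball_abs_truncatedBubble_rpow μ (a := a) (c := c) hp
  calc _ = ∫ x in ball (0 : E) c, (2 ^ (-a) - 10 ^ (-a)) ^ p ∂μ := by
        rw [setIntegral_const, smul_eq_mul, measureReal_def μ (ball 0 c),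
          Measure.addHaar_ball_of_pos μ 0 hc, ENNReal.toReal_mul,
          ENNReal.toReal_ofReal (by positivity), ← measureReal_def]
        ring
    _ ≤ ∫ x in ball (0 : E) c, |truncatedBubble a c x| ^ p ∂μ :=
        setIntegral_mono_on (integrableOn_const measure_ball_lt_top.ne) (hint.mono_set hsub)
          measurableSet_ball fun x hx => rpow_le_rpow hδ
            ((two_rpow_neg_sub_ten_rpow_neg_le_truncatedBubble ha hc hc3
              (mem_ball_zero_iff.mp hx).le).trans (le_abs_self _)) hp
    _ ≤ ∫ x in ball (0 : E) 1, |truncatedBubble a c x| ^ p ∂μ :=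
        setIntegral_mono_set hint (Eventually.of_forall fun _ => by positivity)
          hsub.eventuallyLE

lemma setIntegral_abs_truncatedBubble_rpow_le [Nontrivial E] (ha : 0 ≤ a) (hp : 0 ≤ p)
    (hap : a * p = finrank ℝ E) (hc : 0 < c) :
    ∫ x in ball (0 : E) 1, |truncatedBubble a c x| ^ p ∂μ ≤
      2 ^ (finrank ℝ E : ℝ) * (∫ y, (1 + ‖y‖) ^ (-(2 * (finrank ℝ E : ℝ))) ∂μ) *
        c ^ finrank ℝ E := by
  set d := finrank ℝ E
  set g : E → ℝ := fun y => (1 + ‖y‖) ^ (-(2 * (d : ℝ)))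
  have hd : (0 : ℝ) < d := Nat.cast_pos.mpr finrank_pos
  have hg : Integrable (fun x => 2 ^ (d : ℝ) * g (c⁻¹ • x)) μ :=
    ((integrable_one_add_norm (by linarith)).comp_smul (inv_ne_zero hc.ne')).const_mul _
  calc _ ≤ ∫ x in ball (0 : E) 1, 2 ^ (d : ℝ) * g (c⁻¹ • x) ∂μ :=
        setIntegral_mono_on (integrableOn_ball_abs_truncatedBubble_rpow μ hp) hg.integrableOn
          measurableSet_ball fun x hx => by
            simpa only [g, hap] using
              abs_truncatedBubble_rpow_le ha hp hc (mem_ball_zero_iff.mp hx).le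
    _ ≤ ∫ x, 2 ^ (d : ℝ) * g (c⁻¹ • x) ∂μ :=
        setIntegral_le_integral hg (Eventually.of_forall fun _ => by positivity)
    _ = _ := by
        rw [integral_const_mul, Measure.integral_comp_inv_smul_of_nonneg μ g hc.le, smul_eq_mul]
        ring

end TruncatedBubble

lemma eq_integral_abs_rpow_rpow_neg_inv {α : Type*} [MeasurableSpace α] {μ : Measure α}
    {f : α → ℝ} {lam p : ℝ} (hlam : 0 < lam) (hp : 0 < p)
    (h : (∫ x, |lam * f x| ^ p ∂μ) ^ p⁻¹ = 1) :
    lam = (∫ x, |f x| ^ p ∂μ) ^ (-p⁻¹) := by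
  have hI : 0 ≤ ∫ x, |f x| ^ p ∂μ := integral_nonneg fun _ => by positivity
  have hscale : ∫ x, |lam * f x| ^ p ∂μ = lam ^ p * ∫ x, |f x| ^ p ∂μ := by
    rw [← integral_const_mul]
    congr 1 with x
    rw [abs_mul, abs_of_pos hlam, mul_rpow hlam.le (abs_nonneg _)]
  rw [hscale, mul_rpow (by positivity) hI, rpow_rpow_inv hlam.le hp.ne'] at h
  rw [rpow_neg hI]
  exact eq_inv_of_mul_eq_one_left h

lemma rpow_neg_mem_Icc_of_mul_le_of_le_mul {m M C t I q : ℝ} (hm : 0 < m) (ht : 0 < t)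
    (hq : 0 < q) (hlow : m * t ≤ I) (hupp : I ≤ M * t) (hmC : m ^ (-q) ≤ C)
    (hMC : M ^ q ≤ C) :
    I ^ (-q) ∈ Set.Icc (C⁻¹ * t ^ (-q)) (C * t ^ (-q)) := by
  have hI : 0 < I := (mul_pos hm ht).trans_le hlow
  have hM : 0 < M := pos_of_mul_pos_left (hI.trans_le hupp) ht.le
  constructor
  · calc C⁻¹ * t ^ (-q) ≤ M ^ (-q) * t ^ (-q) := by
          gcongr
          rw [rpow_neg hM.le]
          exact inv_anti₀ (by positivity) hMC
      _ = (M * t) ^ (-q) := (mul_rpow hM.le ht.le).symm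
      _ ≤ I ^ (-q) := rpow_le_rpow_of_nonpos hI hupp (neg_nonpos.mpr hq.le)
  · calc I ^ (-q) ≤ (m * t) ^ (-q) :=
          rpow_le_rpow_of_nonpos (mul_pos hm ht) hlow (neg_nonpos.mpr hq.le)
      _ = m ^ (-q) * t ^ (-q) := mul_rpow hm.le ht.le
      _ ≤ C * t ^ (-q) := by gcongr

theorem normalization_constant_asymptotics_general (N : ℕ) (hN : 1 ≤ N) (s : ℝ)
    (hs1 : s < min 1 ((N : ℝ) / 2)) :
    ∃ C : ℝ, 0 < C ∧
      ∀ c : ℝ, 0 < c → c < 1 / 3 → ∀ lam : ℝ, 0 < lam →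
        (∫ x in Metric.ball (0 : EuclideanSpace ℝ (Fin N)) 1,
            |lam * ((1 + ‖x‖ ^ 2 / c ^ 2) ^ (-(((N : ℝ) - 2 * s)) / 2) -
              (1 + 1 / c ^ 2) ^ (-(((N : ℝ) - 2 * s)) / 2))| ^
              (2 * (N : ℝ) / ((N : ℝ) - 2 * s))) ^ (((N : ℝ) - 2 * s) / (2 * (N : ℝ))) = 1 →
        C⁻¹ * c ^ (-(((N : ℝ) - 2 * s)) / 2) ≤ lam ∧
          lam ≤ C * c ^ (-(((N : ℝ) - 2 * s)) / 2) := by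
  simp_rw [neg_div, ← inv_div (2 * (N : ℝ)) ((N : ℝ) - 2 * s)]
  have hd : finrank ℝ (EuclideanSpace ℝ (Fin N)) = N := finrank_euclideanSpace_fin
  have : Nontrivial (EuclideanSpace ℝ (Fin N)) := nontrivial_of_finrank_pos (hd ▸ hN)
  have hNs : 0 < (N : ℝ) - 2 * s := by linarith [(lt_min_iff.mp hs1).2]
  set a := ((N : ℝ) - 2 * s) / 2
  set p := 2 * (N : ℝ) / ((N : ℝ) - 2 * s)
  have ha : 0 < a := by positivity
  have hp : 0 < p := div_pos (by positivity) hNs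
  have hap : a * p = N := by simp only [a, p]; field_simp
  set m := (2 ^ (-a) - 10 ^ (-a)) ^ p * volume.real (ball (0 : EuclideanSpace ℝ (Fin N)) 1)
  set M := 2 ^ (N : ℝ) * ∫ y : EuclideanSpace ℝ (Fin N), (1 + ‖y‖) ^ (-(2 * (N : ℝ)))
  have hm : 0 < m := mul_pos
    (rpow_pos_of_pos (sub_pos.mpr (rpow_lt_rpow_of_neg two_pos (by norm_num) (by linarith))) _)
    (ENNReal.toReal_pos (measure_ball_pos _ _ one_pos).ne' measure_ball_lt_top.ne)
  refine ⟨max (m ^ (-p⁻¹)) (M ^ p⁻¹), lt_max_of_lt_left (by positivity),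
    fun c hc hc3 lam hlam hnorm => ?_⟩
  have hcN : (c ^ N) ^ (-p⁻¹) = c ^ (-a) := by
    rw [← rpow_natCast, ← rpow_mul hc.le, ← hap]
    field_simp
  rw [eq_integral_abs_rpow_rpow_neg_inv hlam hp hnorm, ← hcN]
  have hlow := mul_pow_finrank_le_setIntegral_abs_truncatedBubble_rpow
    (volume : Measure (EuclideanSpace ℝ (Fin N))) ha.le hp.le hc hc3
  have hupp := setIntegral_abs_truncatedBubble_rpow_le
    (volume : Measure (EuclideanSpace ℝ (Fin N))) ha.le hp.le (by rw [hd, hap]) hc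
  rw [hd] at hlow hupp
  exact rpow_neg_mem_Icc_of_mul_le_of_le_mul hm (by positivity) (inv_pos.mpr hp) hlow hupp
    (le_max_left _ _) (le_max_right _ _)

theorem normalization_constant_asymptotics (N : ℕ) (hN : 1 ≤ N) (s : ℝ)
    (hs0 : 0 < s) (hs1 : s < min 1 ((N : ℝ) / 2)) :
    ∃ C : ℝ, 0 < C ∧
      ∀ c : ℝ, 0 < c → c < 1 / 3 → ∀ lam : ℝ, 0 < lam →
        (∫ x in Metric.ball (0 : EuclideanSpace ℝ (Fin N)) 1,
            |lam * ((1 + ‖x‖ ^ 2 / c ^ 2) ^ (-(((N : ℝ) - 2 * s)) / 2) -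
              (1 + 1 / c ^ 2) ^ (-(((N : ℝ) - 2 * s)) / 2))| ^
              (2 * (N : ℝ) / ((N : ℝ) - 2 * s))) ^ (((N : ℝ) - 2 * s) / (2 * (N : ℝ))) = 1 →
        C⁻¹ * c ^ (-(((N : ℝ) - 2 * s)) / 2) ≤ lam ∧
          lam ≤ C * c ^ (-(((N : ℝ) - 2 * s)) / 2) :=
  normalization_constant_asymptotics_general N hN s hs1
end

section
/- Let N ≥ 1, s ∈ (0, min(1, N/2)), and set Φ_ε(x) = (1 + |x|²/ε²)^{-(N-2s)/2}. Then lim_{ε→0} ε^{-(N-2s)} ‖u_ε‖²_{L^{2N/(N-2s)}(ℝ^N)} = ‖Φ_1‖²_{L^{2N/(N-2s)}(ℝ^N)}, where u_ε(x) = [ (1+|x|²/ε²)^{-(N-2s)/2} - (1+R²/ε²)^{-(N-2s)/2} ] χ_{B_R(0)}(x) for a fixed R > 0. -/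
/-!
Substituting `x = ε y` turns `u_ε` into `Φ_1 - Φ_1(R/ε)` cut off outside the ball of radius `R/ε`,
and produces the factor `ε^N` in the integral of `|u_ε|^p`; raised to the power `2/p = (N-2s)/N`
it cancels `ε^{-(N-2s)}` exactly. As `R/ε → ∞` the truncated profiles converge pointwise to `Φ_1`
and are dominated by `Φ_1`, whose `p`-th power `(1+|y|²)^{-N}` is integrable, so dominated
convergence finishes the proof.
-/

open Real MeasureTheory Filter Topology Metric Module

section

variable {E : Type*} [NormedAddCommGroup E]

noncomputable def bubble (α : ℝ) (y : E) : ℝ := (1 + ‖y‖ ^ 2) ^ (-α / 2)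

-- `u_ε x = truncBubble α (R / ε) (ε⁻¹ • x)` with `α = N - 2s`.
noncomputable def truncBubble (α ρ : ℝ) (y : E) : ℝ :=
  (ball (0 : E) ρ).indicator (fun y => bubble α y - (1 + ρ ^ 2) ^ (-α / 2)) y

lemma bubble_pos (α : ℝ) (y : E) : 0 < bubble α y := by
  unfold bubble; positivity

lemma abs_truncBubble_le {α : ℝ} (hα : 0 ≤ α) (ρ : ℝ) (y : E) :
    |truncBubble α ρ y| ≤ bubble α y := by
  by_cases hy : y ∈ ball (0 : E) ρ
  · have hyρ : ‖y‖ ^ 2 ≤ ρ ^ 2 := by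
      rw [mem_ball_zero_iff] at hy
      exact pow_le_pow_left₀ (norm_nonneg y) hy.le 2
    have hle : (1 + ρ ^ 2) ^ (-α / 2) ≤ bubble α y :=
      rpow_le_rpow_of_nonpos (by positivity) (by linarith) (by linarith)
    have hnonneg : 0 ≤ (1 + ρ ^ 2) ^ (-α / 2) := by positivity
    rw [truncBubble, Set.indicator_of_mem hy, abs_of_nonneg (by linarith)]
    linarith
  · rw [truncBubble, Set.indicator_of_notMem hy, abs_zero]
    exact (bubble_pos α y).le

lemma tendsto_truncBubble_atTop {α : ℝ} (hα : 0 < α) (y : E) :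
    Tendsto (fun ρ => truncBubble α ρ y) atTop (𝓝 (bubble α y)) := by
  have hcorr : Tendsto (fun ρ : ℝ => (1 + ρ ^ 2) ^ (-α / 2)) atTop (𝓝 0) := by
    have h := (tendsto_rpow_neg_atTop (half_pos hα)).comp
      (tendsto_atTop_add_const_left _ 1 (tendsto_pow_atTop two_ne_zero))
    simpa only [Function.comp_def, neg_div] using h
  have hinside : ∀ᶠ ρ in atTop, y ∈ ball (0 : E) ρ :=
    (eventually_gt_atTop ‖y‖).mono fun ρ hρ => mem_ball_zero_iff.mpr hρ
  have hlim := (tendsto_const_nhds (x := bubble α y)).sub hcorr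
  rw [sub_zero] at hlim
  exact hlim.congr' (hinside.mono fun ρ hρ => (Set.indicator_of_mem hρ _).symm)

variable [NormedSpace ℝ E]

lemma truncBubble_inv_smul (α : ℝ) {R ε : ℝ} (hε : 0 < ε) (x : E) :
    truncBubble α (R / ε) (ε⁻¹ • x) = (ball (0 : E) R).indicator
      (fun x => (1 + ‖x‖ ^ 2 / ε ^ 2) ^ (-α / 2) - (1 + R ^ 2 / ε ^ 2) ^ (-α / 2)) x := by
  have hnorm : ‖ε⁻¹ • x‖ = ‖x‖ / ε := by
    rw [norm_smul, norm_inv, norm_of_nonneg hε.le, inv_mul_eq_div]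
  have hmem : ε⁻¹ • x ∈ ball (0 : E) (R / ε) ↔ x ∈ ball (0 : E) R := by
    rw [mem_ball_zero_iff, mem_ball_zero_iff, hnorm, div_lt_div_iff_of_pos_right hε]
  by_cases hx : x ∈ ball (0 : E) R
  · rw [truncBubble, Set.indicator_of_mem (hmem.mpr hx), Set.indicator_of_mem hx, bubble, hnorm,
      div_pow, div_pow]
  · rw [truncBubble, Set.indicator_of_notMem (mt hmem.mp hx), Set.indicator_of_notMem hx]

variable [FiniteDimensional ℝ E] [MeasurableSpace E] [BorelSpace E]
  (μ : Measure E) [μ.IsAddHaarMeasure]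

lemma integrable_bubble_rpow {α p : ℝ} (hdim : (finrank ℝ E : ℝ) < α * p) :
    Integrable (fun y => bubble α y ^ p) μ := by
  have h := integrable_rpow_neg_one_add_norm_sq (μ := μ) hdim
  refine h.congr (Eventually.of_forall fun y => ?_)
  show _ = ((1 + ‖y‖ ^ 2) ^ (-α / 2)) ^ p
  rw [← rpow_mul (by positivity)]
  ring_nf

lemma tendsto_integral_truncBubble_rpow {α p : ℝ} (hα : 0 < α) (hp : 0 < p)
    (hdim : (finrank ℝ E : ℝ) < α * p) :
    Tendsto (fun ρ => ∫ y, |truncBubble α ρ y| ^ p ∂μ) atTop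
      (𝓝 (∫ y, |bubble α y| ^ p ∂μ)) := by
  refine tendsto_integral_filter_of_dominated_convergence (fun y => bubble α y ^ p)
    (Eventually.of_forall fun ρ => ?_) (Eventually.of_forall fun ρ => ?_)
    (integrable_bubble_rpow μ hdim) (Eventually.of_forall fun y => ?_)
  · refine (Measurable.aestronglyMeasurable ?_)
    unfold truncBubble bubble
    exact (Measurable.indicator (by fun_prop) measurableSet_ball).abs.pow_const p
  · refine Eventually.of_forall fun y => ?_
    rw [norm_of_nonneg (by positivity)]
    exact rpow_le_rpow (abs_nonneg _) (abs_truncBubble_le hα.le ρ y) hp.le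
  · exact (tendsto_truncBubble_atTop hα y).abs.rpow_const (Or.inr hp.le)

lemma integral_truncBubble_rescaled (α p : ℝ) {R ε : ℝ} (hε : 0 < ε) :
    ∫ x, |(ball (0 : E) R).indicator
        (fun x => (1 + ‖x‖ ^ 2 / ε ^ 2) ^ (-α / 2) - (1 + R ^ 2 / ε ^ 2) ^ (-α / 2)) x| ^ p ∂μ
      = ε ^ finrank ℝ E * ∫ y, |truncBubble α (R / ε) y| ^ p ∂μ := by
  simp_rw [← truncBubble_inv_smul α hε]
  exact Measure.integral_comp_inv_smul_of_nonneg μ (fun y => |truncBubble α (R / ε) y| ^ p) hε.le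

lemma tendsto_integral_truncBubble_rescaled {α p R : ℝ} (hα : 0 < α) (hp : 0 < p) (hR : 0 < R)
    (hdim : (finrank ℝ E : ℝ) < α * p) :
    Tendsto (fun ε => (ε ^ finrank ℝ E)⁻¹ * ∫ x, |(ball (0 : E) R).indicator
        (fun x => (1 + ‖x‖ ^ 2 / ε ^ 2) ^ (-α / 2) - (1 + R ^ 2 / ε ^ 2) ^ (-α / 2)) x| ^ p ∂μ)
      (𝓝[>] 0) (𝓝 (∫ y, |bubble α y| ^ p ∂μ)) := by
  have hradius : Tendsto (fun ε : ℝ => R / ε) (𝓝[>] 0) atTop := by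
    simpa only [div_eq_mul_inv] using tendsto_inv_nhdsGT_zero.const_mul_atTop hR
  refine ((tendsto_integral_truncBubble_rpow μ hα hp hdim).comp hradius).congr' ?_
  filter_upwards [self_mem_nhdsWithin] with ε (hε : 0 < ε)
  rw [integral_truncBubble_rescaled μ α p hε, inv_mul_cancel_left₀ (by positivity),
    Function.comp_apply]

end

theorem rescaled_Lp_norm_of_minimizing_sequence_general (N : ℕ) (hN : 1 ≤ N) (s : ℝ)
    (hs1 : s < min 1 ((N : ℝ) / 2)) (R : ℝ) (hR : 0 < R) :
    Tendsto
      (fun ε : ℝ =>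
        ε ^ (-(((N : ℝ) - 2 * s))) *
          (∫ x : EuclideanSpace ℝ (Fin N),
              |(Metric.ball (0 : EuclideanSpace ℝ (Fin N)) R).indicator
                (fun x => (1 + ‖x‖ ^ 2 / ε ^ 2) ^ (-(((N : ℝ) - 2 * s)) / 2) -
                  (1 + R ^ 2 / ε ^ 2) ^ (-(((N : ℝ) - 2 * s)) / 2)) x| ^
              (2 * (N : ℝ) / ((N : ℝ) - 2 * s))) ^ (((N : ℝ) - 2 * s) / (N : ℝ)))
      (nhdsWithin 0 (Set.Ioi 0))
      (nhds ((∫ x : EuclideanSpace ℝ (Fin N),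
          |(1 + ‖x‖ ^ 2) ^ (-(((N : ℝ) - 2 * s)) / 2)| ^
            (2 * (N : ℝ) / ((N : ℝ) - 2 * s))) ^ (((N : ℝ) - 2 * s) / (N : ℝ)))) := by
  set α : ℝ := (N : ℝ) - 2 * s
  have hN0 : (0 : ℝ) < N := by exact_mod_cast hN
  have hα : 0 < α := by linarith [(lt_min_iff.mp hs1).2]
  have hdim : (finrank ℝ (EuclideanSpace ℝ (Fin N)) : ℝ) < α * (2 * N / α) := by
    rw [finrank_euclideanSpace_fin, mul_div_cancel₀ _ hα.ne']
    linarith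
  have hlim := (tendsto_integral_truncBubble_rescaled volume hα (by positivity) hR hdim).rpow_const
    (p := α / N) (Or.inr (by positivity))
  rw [finrank_euclideanSpace_fin] at hlim
  refine hlim.congr' ?_
  filter_upwards [self_mem_nhdsWithin] with ε (hε : 0 < ε)
  rw [mul_rpow (by positivity) (integral_nonneg fun x => by positivity), inv_rpow (by positivity),
    ← rpow_natCast, ← rpow_mul hε.le, mul_div_cancel₀ _ hN0.ne', rpow_neg hε.le]

theorem rescaled_Lp_norm_of_minimizing_sequence (N : ℕ) (hN : 1 ≤ N) (s : ℝ)
    (hs0 : 0 < s) (hs1 : s < min 1 ((N : ℝ) / 2)) (R : ℝ) (hR : 0 < R) :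
    Tendsto
      (fun ε : ℝ =>
        ε ^ (-(((N : ℝ) - 2 * s))) *
          (∫ x : EuclideanSpace ℝ (Fin N),
              |(Metric.ball (0 : EuclideanSpace ℝ (Fin N)) R).indicator
                (fun x => (1 + ‖x‖ ^ 2 / ε ^ 2) ^ (-(((N : ℝ) - 2 * s)) / 2) -
                  (1 + R ^ 2 / ε ^ 2) ^ (-(((N : ℝ) - 2 * s)) / 2)) x| ^
              (2 * (N : ℝ) / ((N : ℝ) - 2 * s))) ^ (((N : ℝ) - 2 * s) / (N : ℝ)))
      (nhdsWithin 0 (Set.Ioi 0))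
      (nhds ((∫ x : EuclideanSpace ℝ (Fin N),
          |(1 + ‖x‖ ^ 2) ^ (-(((N : ℝ) - 2 * s)) / 2)| ^
            (2 * (N : ℝ) / ((N : ℝ) - 2 * s))) ^ (((N : ℝ) - 2 * s) / (N : ℝ)))) :=
  rescaled_Lp_norm_of_minimizing_sequence_general N hN s hs1 R hR
end

section
/- Let N ≥ 1 and s ∈ (0, min(1, N/2)). Then the double integral ∫₂^∞ ∫₂^∞ σ^{N-1} t^{N-1} (σ + t)^{-(N+2s)} | σ^{-(N-2s)} - t^{-(N-2s)} |² dσ dt is finite and strictly positive. -/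
open Real MeasureTheory Set

/- Since both σ^(-a) and t^(-a) are positive, (σ^(-a) - t^(-a))² ≤ σ^(-2a) + t^(-2a). Splitting
(σ + t)^(-A) ≤ σ^(-c) t^(c-A) for 0 ≤ c ≤ A then dominates the integrand by
σ^(m-2a-c) t^(m+c-A) plus its mirror image. With m = N - 1, A = N + 2s, a = N - 2s both exponents
are < -1 exactly when max(0, 4s - N) < c < 2s, and such a c exists because 0 < s < N/2. The
integral is positive because the integrand is positive off the diagonal. -/

noncomputable def radialKernel (m A a : ℝ) (p : ℝ × ℝ) : ℝ :=
  p.1 ^ m * p.2 ^ m * (p.1 + p.2) ^ (-A) * |p.1 ^ (-a) - p.2 ^ (-a)| ^ 2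

lemma rpow_neg_add_le_rpow_mul_rpow {A c σ t : ℝ} (hc : 0 ≤ c) (hcA : c ≤ A)
    (hσ : 0 < σ) (ht : 0 < t) :
    (σ + t) ^ (-A) ≤ σ ^ (-c) * t ^ (c - A) := by
  have hσt : 0 < σ + t := by linarith
  have key : σ ^ c * t ^ (A - c) ≤ (σ + t) ^ A :=
    calc σ ^ c * t ^ (A - c) ≤ (σ + t) ^ c * (σ + t) ^ (A - c) := by
          gcongr <;> linarith
      _ = (σ + t) ^ A := by rw [← rpow_add hσt, add_sub_cancel]
  rw [rpow_neg hσt.le, rpow_neg hσ.le, ← neg_sub, rpow_neg ht.le, ← mul_inv]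
  exact inv_anti₀ (by positivity) key

lemma rpow_mul_rpow_mul_rpow_neg_add_mul_sq_le {m A a c σ t : ℝ} (hc : 0 ≤ c) (hcA : c ≤ A)
    (hσ : 0 < σ) (ht : 0 < t) :
    σ ^ m * t ^ m * (σ + t) ^ (-A) * (σ ^ (-a)) ^ 2 ≤
      σ ^ (m - 2 * a - c) * t ^ (m + c - A) := by
  have hσ_exp : σ ^ (m - 2 * a - c) = σ ^ m * (σ ^ (-a)) ^ 2 * σ ^ (-c) := by
    rw [← rpow_natCast, ← rpow_mul hσ.le, ← rpow_add hσ, ← rpow_add hσ]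
    ring_nf
  have ht_exp : t ^ (m + c - A) = t ^ m * t ^ (c - A) := by
    rw [← rpow_add ht]
    ring_nf
  calc σ ^ m * t ^ m * (σ + t) ^ (-A) * (σ ^ (-a)) ^ 2
      ≤ σ ^ m * t ^ m * (σ ^ (-c) * t ^ (c - A)) * (σ ^ (-a)) ^ 2 := by
        gcongr; exact rpow_neg_add_le_rpow_mul_rpow hc hcA hσ ht
    _ = σ ^ (m - 2 * a - c) * t ^ (m + c - A) := by
        rw [hσ_exp, ht_exp]
        ring

theorem MeasureTheory.IntegrableOn.mul_prod {α β L : Type*} [MeasurableSpace α]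
    [MeasurableSpace β] [NormedRing L] {μ : Measure α} {ν : Measure β} [SFinite μ]
    [SFinite ν] {f : α → L} {g : β → L} {s : Set α} {t : Set β}
    (hf : IntegrableOn f s μ) (hg : IntegrableOn g t ν) :
    IntegrableOn (fun p : α × β => f p.1 * g p.2) (s ×ˢ t) (μ.prod ν) := by
  rw [IntegrableOn, ← Measure.prod_restrict]
  exact Integrable.mul_prod hf hg

namespace radialKernel

variable {m A a : ℝ}

lemma measurable : Measurable (radialKernel m A a) := by
  unfold radialKernel
  fun_prop

lemma nonneg {p : ℝ × ℝ} (h1 : 0 ≤ p.1) (h2 : 0 ≤ p.2) : 0 ≤ radialKernel m A a p := by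
  unfold radialKernel
  have := add_nonneg h1 h2
  positivity

lemma pos {σ t : ℝ} (ha : 0 < a) (hσ : 0 < σ) (hσt : σ < t) :
    0 < radialKernel m A a (σ, t) := by
  have ht : 0 < t := hσ.trans hσt
  have hne : σ ^ (-a) - t ^ (-a) ≠ 0 :=
    (sub_pos.mpr (rpow_lt_rpow_of_neg hσ hσt (neg_neg_of_pos ha))).ne'
  unfold radialKernel
  have := add_pos hσ ht
  positivity

lemma le_rpow_mul_rpow_add_rpow_mul_rpow {c σ t : ℝ} (hc : 0 ≤ c) (hcA : c ≤ A) (hσ : 0 < σ)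
    (ht : 0 < t) :
    radialKernel m A a (σ, t) ≤
      σ ^ (m - 2 * a - c) * t ^ (m + c - A) + t ^ (m - 2 * a - c) * σ ^ (m + c - A) := by
  set x := σ ^ (-a)
  set y := t ^ (-a)
  have hxy : |x - y| ^ 2 ≤ x ^ 2 + y ^ 2 := by
    have : 0 ≤ x * y := by positivity
    rw [sq_abs]
    nlinarith
  have hP : 0 ≤ σ ^ m * t ^ m * (σ + t) ^ (-A) := by
    have := add_pos hσ ht
    positivity
  calc radialKernel m A a (σ, t)
      ≤ σ ^ m * t ^ m * (σ + t) ^ (-A) * (x ^ 2 + y ^ 2) := mul_le_mul_of_nonneg_left hxy hP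
    _ = σ ^ m * t ^ m * (σ + t) ^ (-A) * x ^ 2 + t ^ m * σ ^ m * (t + σ) ^ (-A) * y ^ 2 := by
        rw [add_comm t σ]
        ring
    _ ≤ _ := add_le_add (rpow_mul_rpow_mul_rpow_neg_add_mul_sq_le hc hcA hσ ht)
        (rpow_mul_rpow_mul_rpow_neg_add_mul_sq_le hc hcA ht hσ)

lemma integrableOn_Ioi_prod_Ioi {c r : ℝ} (hr : 0 < r) (hc : 0 ≤ c) (hcA : c ≤ A)
    (h₁ : m - 2 * a - c < -1) (h₂ : m + c - A < -1) :
    IntegrableOn (radialKernel m A a) (Ioi r ×ˢ Ioi r) := by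
  have hI₁ := integrableOn_Ioi_rpow_of_lt h₁ hr
  have hI₂ := integrableOn_Ioi_rpow_of_lt h₂ hr
  have hdom : IntegrableOn (fun p : ℝ × ℝ => p.1 ^ (m - 2 * a - c) * p.2 ^ (m + c - A) +
      p.2 ^ (m - 2 * a - c) * p.1 ^ (m + c - A)) (Ioi r ×ˢ Ioi r) := by
    refine (hI₁.mul_prod hI₂).add ?_
    simpa only [mul_comm] using hI₂.mul_prod hI₁
  refine hdom.mono' measurable.aestronglyMeasurable ?_
  rw [ae_restrict_iff' (measurableSet_Ioi.prod measurableSet_Ioi)]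
  refine ae_of_all _ fun ⟨σ, t⟩ ⟨hrσ, hrt⟩ => ?_
  have hσ : 0 < σ := hr.trans hrσ
  have ht : 0 < t := hr.trans hrt
  rw [Real.norm_of_nonneg (nonneg hσ.le ht.le)]
  exact le_rpow_mul_rpow_add_rpow_mul_rpow hc hcA hσ ht

lemma setIntegral_Ioi_prod_Ioi_pos {r : ℝ} (hr : 0 ≤ r) (ha : 0 < a)
    (hint : IntegrableOn (radialKernel m A a) (Ioi r ×ˢ Ioi r)) :
    0 < ∫ p in Ioi r ×ˢ Ioi r, radialKernel m A a p := by
  have hbox : MeasurableSet (Ioi r ×ˢ Ioi r) := measurableSet_Ioi.prod measurableSet_Ioi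
  have hnonneg : 0 ≤ᵐ[volume.restrict (Ioi r ×ˢ Ioi r)] radialKernel m A a :=
    (ae_restrict_iff' hbox).mpr <| ae_of_all _ fun p ⟨h₁, h₂⟩ =>
      nonneg (hr.trans (le_of_lt h₁)) (hr.trans (le_of_lt h₂))
  rw [setIntegral_pos_iff_support_of_nonneg_ae hnonneg hint]
  let U : Set (ℝ × ℝ) := (Ioi r ×ˢ Ioi r) ∩ {p | p.1 < p.2}
  have hU_open : IsOpen U :=
    (isOpen_Ioi.prod isOpen_Ioi).inter (isOpen_lt continuous_fst continuous_snd)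
  have hU_nonempty : U.Nonempty := ⟨(r + 1, r + 2), ⟨by simp, by simp⟩, by simp⟩
  have hU_sub : U ⊆ Function.support (radialKernel m A a) ∩ (Ioi r ×ˢ Ioi r) :=
    fun p ⟨hp, hlt⟩ => ⟨(pos ha (hr.trans_lt hp.1) hlt).ne', hp⟩
  exact (hU_open.measure_pos volume hU_nonempty).trans_le (measure_mono hU_sub)

end radialKernel

theorem double_integral_finite_positive_general (N : ℕ) (s : ℝ)
    (hs0 : 0 < s) (hs1 : s < min 1 ((N : ℝ) / 2)) :
    IntegrableOn
      (fun p : ℝ × ℝ =>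
        p.1 ^ ((N : ℝ) - 1) * p.2 ^ ((N : ℝ) - 1) * (p.1 + p.2) ^ (-(((N : ℝ) + 2 * s))) *
          |p.1 ^ (-(((N : ℝ) - 2 * s))) - p.2 ^ (-(((N : ℝ) - 2 * s)))| ^ 2)
      (Set.Ioi (2 : ℝ) ×ˢ Set.Ioi (2 : ℝ)) ∧
    0 < ∫ p in Set.Ioi (2 : ℝ) ×ˢ Set.Ioi (2 : ℝ),
        p.1 ^ ((N : ℝ) - 1) * p.2 ^ ((N : ℝ) - 1) * (p.1 + p.2) ^ (-(((N : ℝ) + 2 * s))) *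
          |p.1 ^ (-(((N : ℝ) - 2 * s))) - p.2 ^ (-(((N : ℝ) - 2 * s)))| ^ 2 := by
  have hsN : s < (N : ℝ) / 2 := (lt_min_iff.mp hs1).2
  obtain ⟨c, hc_lo, hc_hi⟩ :=
    exists_between (max_lt (by linarith) (by linarith) : max (4 * s - N) 0 < 2 * s)
  obtain ⟨hc₁, hc₀⟩ := max_lt_iff.mp hc_lo
  have hint : IntegrableOn (radialKernel (N - 1) (N + 2 * s) (N - 2 * s)) (Ioi 2 ×ˢ Ioi 2) :=
    radialKernel.integrableOn_Ioi_prod_Ioi two_pos hc₀.le (by linarith) (by linarith)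
      (by linarith)
  exact ⟨hint, radialKernel.setIntegral_Ioi_prod_Ioi_pos zero_le_two (by linarith) hint⟩

theorem double_integral_finite_positive (N : ℕ) (hN : 1 ≤ N) (s : ℝ)
    (hs0 : 0 < s) (hs1 : s < min 1 ((N : ℝ) / 2)) :
    IntegrableOn
      (fun p : ℝ × ℝ =>
        p.1 ^ ((N : ℝ) - 1) * p.2 ^ ((N : ℝ) - 1) * (p.1 + p.2) ^ (-(((N : ℝ) + 2 * s))) *
          |p.1 ^ (-(((N : ℝ) - 2 * s))) - p.2 ^ (-(((N : ℝ) - 2 * s)))| ^ 2)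
      (Set.Ioi (2 : ℝ) ×ˢ Set.Ioi (2 : ℝ)) ∧
    0 < ∫ p in Set.Ioi (2 : ℝ) ×ˢ Set.Ioi (2 : ℝ),
        p.1 ^ ((N : ℝ) - 1) * p.2 ^ ((N : ℝ) - 1) * (p.1 + p.2) ^ (-(((N : ℝ) + 2 * s))) *
          |p.1 ^ (-(((N : ℝ) - 2 * s))) - p.2 ^ (-(((N : ℝ) - 2 * s)))| ^ 2 :=
  double_integral_finite_positive_general N s hs0 hs1
end
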